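/- In an α-weight-balanced tree with n nodes, define a node v to be a layer-i root if ⌈log₂ w(v)⌉ − 1 = i and v's parent has strictly greater rank. Then the number of layer-i roots is at most n / 2^i, and the number of non-root nodes attached to a single layer root (descendants with the same rank) is at most log_{1/(1−α)} 2, a constant. -/

import Mathlib

inductive BT (α : Type) : Type
  | leaf : BT α
  | node : BT α → α → BT α → BT α

namespace BT

def size {α : Type} : BT α → ℕ
  | leaf => 0
  | node l _ r => size l + size r + 1

def weight {α : Type} (t : BT α) : ℕ := size t + 1

/-- `α`-weight-balance: at every internal node, `a ≤ w(T_L)/w(T) ≤ 1 - a`. -/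
def WB {α : Type} (a : ℝ) : BT α → Prop
  | leaf => True
  | node l _ r =>
      WB a l ∧ WB a r ∧
      a ≤ (weight l : ℝ) / ((weight l : ℝ) + (weight r : ℝ)) ∧
      (weight l : ℝ) / ((weight l : ℝ) + (weight r : ℝ)) ≤ 1 - a

/-- The rank of a (nonempty) weight-balanced tree: `⌈log₂ w(T)⌉ − 1`. -/
def wrank {α : Type} (t : BT α) : ℕ := Nat.clog 2 (weight t) - 1

/-- Count the layer-`i` roots of a tree: nodes of rank `i` whose parent has
rank strictly greater than `i`; the second argument is the rank bound coming
from the parent (the root of the whole tree has no parent and counts as a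
layer root). -/
def clrAux {α : Type} (i : ℕ) : BT α → ℕ → ℕ
  | leaf, _ => 0
  | node l v r, pr =>
      (if wrank (node l v r) = i ∧ i < pr then 1 else 0) +
        clrAux i l (wrank (node l v r)) + clrAux i r (wrank (node l v r))

def countLayerRoots {α : Type} (t : BT α) (i : ℕ) : ℕ := clrAux i t (wrank t + 1)

/-- The number of nodes of `t` whose subtree has rank exactly `i`. -/
def countOfWRank {α : Type} (i : ℕ) : BT α → ℕ
  | leaf => 0
  | node l v r =>
      (if wrank (node l v r) = i then 1 else 0) + countOfWRank i l + countOfWRank i r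

/-- `s` occurs as a subtree of `t`. -/
def IsSubtree {α : Type} (s : BT α) : BT α → Prop
  | leaf => s = leaf
  | node l v r => s = node l v r ∨ IsSubtree s l ∨ IsSubtree s r

end BT


namespace BTProof
open BT

variable {β : Type}

lemma weight_pos (t : BT β) : 0 < BT.weight t := Nat.succ_pos _

lemma weight_node (l : BT β) (v : β) (r : BT β) :
    BT.weight (BT.node l v r) = BT.weight l + BT.weight r := by
  simp [BT.weight, BT.size]; omega

lemma two_le_weight_node (l : BT β) (v : β) (r : BT β) :
    2 ≤ BT.weight (BT.node l v r) := by
  have h1 := weight_pos l; have h2 := weight_pos r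
  rw [weight_node]; omega

lemma clog_node (l : BT β) (v : β) (r : BT β) :
    Nat.clog 2 (BT.weight (BT.node l v r)) = BT.wrank (BT.node l v r) + 1 := by
  have h2 := two_le_weight_node l v r
  have h1 : 0 < Nat.clog 2 (BT.weight (BT.node l v r)) :=
    (Nat.lt_clog_iff_pow_lt one_lt_two).mpr (by simp; omega)
  simp [BT.wrank]; omega

lemma pow_lt_weight {l : BT β} {v : β} {r : BT β} {i : ℕ}
    (h : BT.wrank (BT.node l v r) = i) : 2 ^ i < BT.weight (BT.node l v r) := by
  rw [← Nat.lt_clog_iff_pow_lt one_lt_two, clog_node]; omega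

lemma weight_le_pow {l : BT β} {v : β} {r : BT β} {i : ℕ}
    (h : BT.wrank (BT.node l v r) = i) : BT.weight (BT.node l v r) ≤ 2 ^ (i + 1) := by
  rw [← Nat.clog_le_iff_le_pow one_lt_two, clog_node]; omega

lemma wrank_le_left (l : BT β) (v : β) (r : BT β) :
    BT.wrank l ≤ BT.wrank (BT.node l v r) := by
  have := Nat.clog_mono_right 2 (show BT.weight l ≤ BT.weight (BT.node l v r) by
    rw [weight_node]; omega)
  simp [BT.wrank]; omega

lemma wrank_le_right (l : BT β) (v : β) (r : BT β) :
    BT.wrank r ≤ BT.wrank (BT.node l v r) := by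
  have := Nat.clog_mono_right 2 (show BT.weight r ≤ BT.weight (BT.node l v r) by
    rw [weight_node]; omega)
  simp [BT.wrank]; omega

lemma countOfWRank_eq_zero {i : ℕ} : ∀ {t : BT β}, BT.wrank t < i → BT.countOfWRank i t = 0
  | BT.leaf, _ => rfl
  | BT.node l v r, h => by
    rw [BT.countOfWRank]
    have hl := countOfWRank_eq_zero (lt_of_le_of_lt (wrank_le_left l v r) h)
    have hr := countOfWRank_eq_zero (lt_of_le_of_lt (wrank_le_right l v r) h)
    rw [hl, hr, if_neg (by omega)]

lemma wrank_leaf : BT.wrank (BT.leaf : BT β) = 0 := by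
  simp [BT.wrank, BT.weight, BT.size, Nat.clog]

/-- Key chain lemma. -/
lemma chain_bound (a : ℝ) (ha₀ : 0 < a) (ha₁ : a ≤ 1 / 2) :
    ∀ t : BT β, BT.WB a t → t ≠ BT.leaf →
      (2 : ℝ) ^ (BT.wrank t) <
        (1 - a) ^ (BT.countOfWRank (BT.wrank t) t - 1) * (BT.weight t : ℝ) := by
  have hb0 : (0:ℝ) < 1 - a := by linarith
  intro t
  induction t with
  | leaf => intro _ h; exact absurd rfl h
  | node l v r ihl ihr =>
    intro hwb _
    obtain ⟨hwbl, hwbr, hrat1, hrat2⟩ := hwb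
    set i := BT.wrank (BT.node l v r) with hi
    have hwgt : (2:ℝ) ^ i < (BT.weight (BT.node l v r) : ℝ) := by
      exact_mod_cast pow_lt_weight hi.symm
    have hwsum : (BT.weight (BT.node l v r) : ℝ) = (BT.weight l : ℝ) + (BT.weight r : ℝ) := by
      exact_mod_cast weight_node l v r
    have hwl0 : (0:ℝ) < (BT.weight l : ℝ) := by exact_mod_cast weight_pos l
    have hwr0 : (0:ℝ) < (BT.weight r : ℝ) := by exact_mod_cast weight_pos r
    have hsum0 : (0:ℝ) < (BT.weight l : ℝ) + (BT.weight r : ℝ) := by linarith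
    -- weight bounds from balance
    have hLb : (BT.weight l : ℝ) ≤ (1 - a) * (BT.weight (BT.node l v r) : ℝ) := by
      rw [hwsum]
      rw [div_le_iff₀ hsum0] at hrat2
      linarith
    have hRb : (BT.weight r : ℝ) ≤ (1 - a) * (BT.weight (BT.node l v r) : ℝ) := by
      rw [hwsum]
      rw [le_div_iff₀ hsum0] at hrat1
      nlinarith
    have hcnt : BT.countOfWRank i (BT.node l v r)
        = 1 + BT.countOfWRank i l + BT.countOfWRank i r := by
      rw [BT.countOfWRank, if_pos hi.symm]
    -- count positive implies rank = i and nonleaf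
    have key : ∀ s : BT β, 0 < BT.countOfWRank i s → BT.wrank s ≤ i →
        BT.wrank s = i ∧ s ≠ BT.leaf := by
      intro s hpos hle
      constructor
      · by_contra hne
        rw [countOfWRank_eq_zero (by omega)] at hpos; omega
      · intro hleaf; subst hleaf; simp [BT.countOfWRank] at hpos
    -- both children can't have positive count
    have hnotboth : ¬ (0 < BT.countOfWRank i l ∧ 0 < BT.countOfWRank i r) := by
      rintro ⟨hcl, hcr⟩
      obtain ⟨hrl, hll⟩ := key l hcl (wrank_le_left l v r)
      obtain ⟨hrr, hlr⟩ := key r hcr (wrank_le_right l v r)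
      -- both nonleaf of rank i: weights each > 2^i
      match l, r with
      | BT.leaf, _ => exact hll rfl
      | _, BT.leaf => exact hlr rfl
      | BT.node l1 v1 r1, BT.node l2 v2 r2 =>
        have h1 := pow_lt_weight hrl
        have h2 := pow_lt_weight hrr
        have h3 := weight_le_pow hi.symm
        rw [weight_node] at h3
        have : 2 ^ (i+1) = 2 ^ i + 2 ^ i := by ring
        omega
    rcases Nat.eq_zero_or_pos (BT.countOfWRank i l) with hcl | hcl
    · rcases Nat.eq_zero_or_pos (BT.countOfWRank i r) with hcr | hcr
      · rw [hcnt, hcl, hcr]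
        norm_num
        exact hwgt
      · -- right chain
        obtain ⟨hrr, hlr⟩ := key r hcr (wrank_le_right l v r)
        have ih := ihr hwbr hlr
        rw [hrr] at ih
        rw [hcnt, hcl]
        have hc1 : 1 + 0 + BT.countOfWRank i r - 1 = BT.countOfWRank i r := by omega
        rw [hc1]
        calc (2:ℝ) ^ i < (1 - a) ^ (BT.countOfWRank i r - 1) * (BT.weight r : ℝ) := ih
          _ ≤ (1 - a) ^ (BT.countOfWRank i r - 1) * ((1-a) * (BT.weight (BT.node l v r) : ℝ)) := by
              apply mul_le_mul_of_nonneg_left hRb (by positivity)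
          _ = (1 - a) ^ (BT.countOfWRank i r - 1 + 1) * (BT.weight (BT.node l v r) : ℝ) := by
              rw [pow_succ]; ring
          _ = (1 - a) ^ (BT.countOfWRank i r) * (BT.weight (BT.node l v r) : ℝ) := by
              rw [Nat.sub_add_cancel hcr]
    · rcases Nat.eq_zero_or_pos (BT.countOfWRank i r) with hcr | hcr
      · obtain ⟨hrl, hll⟩ := key l hcl (wrank_le_left l v r)
        have ih := ihl hwbl hll
        rw [hrl] at ih
        rw [hcnt, hcr]
        have hc1 : 1 + BT.countOfWRank i l + 0 - 1 = BT.countOfWRank i l := by omega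
        rw [hc1]
        calc (2:ℝ) ^ i < (1 - a) ^ (BT.countOfWRank i l - 1) * (BT.weight l : ℝ) := ih
          _ ≤ (1 - a) ^ (BT.countOfWRank i l - 1) * ((1-a) * (BT.weight (BT.node l v r) : ℝ)) := by
              apply mul_le_mul_of_nonneg_left hLb (by positivity)
          _ = (1 - a) ^ (BT.countOfWRank i l - 1 + 1) * (BT.weight (BT.node l v r) : ℝ) := by
              rw [pow_succ]; ring
          _ = (1 - a) ^ (BT.countOfWRank i l) * (BT.weight (BT.node l v r) : ℝ) := by
              rw [Nat.sub_add_cancel hcl]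
      · exact absurd ⟨hcl, hcr⟩ hnotboth

lemma WB_subtree {a : ℝ} : ∀ {t s : BT β}, BT.WB a t → BT.IsSubtree s t → BT.WB a s
  | BT.leaf, s, _, hs => by rw [show s = BT.leaf from hs]; trivial
  | BT.node l v r, s, hwb, hs => by
    rcases hs with h | h | h
    · rw [h]; exact hwb
    · exact WB_subtree hwb.1 h
    · exact WB_subtree hwb.2.1 h

lemma clrAux_eq_zero {i : ℕ} : ∀ {t : BT β} {pr : ℕ}, BT.wrank t ≤ i → pr ≤ i →
    BT.clrAux i t pr = 0
  | BT.leaf, _, _, _ => rfl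
  | BT.node l v r, pr, ht, hpr => by
    rw [BT.clrAux]
    have hl := clrAux_eq_zero (i := i) (le_trans (wrank_le_left l v r) ht) ht
    have hr := clrAux_eq_zero (i := i) (le_trans (wrank_le_right l v r) ht) ht
    rw [hl, hr, if_neg (by omega)]

lemma clr_bound {i : ℕ} : ∀ (t : BT β) (pr : ℕ), 2 ^ i * BT.clrAux i t pr ≤ BT.size t
  | BT.leaf, _ => by simp [BT.clrAux, BT.size]
  | BT.node l v r, pr => by
    rw [BT.clrAux]
    by_cases hc : BT.wrank (BT.node l v r) = i ∧ i < pr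
    · rw [if_pos hc]
      have hl := clrAux_eq_zero (i := i) (t := l) (pr := BT.wrank (BT.node l v r))
        (hc.1 ▸ wrank_le_left l v r) (le_of_eq hc.1)
      have hr := clrAux_eq_zero (i := i) (t := r) (pr := BT.wrank (BT.node l v r))
        (hc.1 ▸ wrank_le_right l v r) (le_of_eq hc.1)
      rw [hl, hr]
      have := pow_lt_weight hc.1
      simp only [BT.weight] at this
      omega
    · rw [if_neg hc]
      have hl := clr_bound (i := i) l (BT.wrank (BT.node l v r))
      have hr := clr_bound (i := i) r (BT.wrank (BT.node l v r))
      simp only [BT.size]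
      rw [Nat.zero_add, Nat.mul_add]
      omega

end BTProof

/-- In an `a`-weight-balanced tree with `n` nodes: the number of layer-`i`
roots (nodes `v` with `⌈log₂ w(v)⌉ − 1 = i` whose parent has strictly greater
rank) is at most `n / 2^i`, and for any node the number of its proper
descendants with the same rank (the nodes attached to it when it is a layer
root) is at most the constant `log_{1/(1−a)} 2`. -/
theorem wb_layer_roots {α : Type} (a : ℝ) (ha₀ : 0 < a) (ha₁ : a ≤ 1 / 2)
    (t : BT α) (h : BT.WB a t) :
    (∀ i : ℕ, (BT.countLayerRoots t i : ℝ) ≤ (BT.size t : ℝ) / 2 ^ i) ∧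
    (∀ s : BT α, BT.IsSubtree s t → s ≠ BT.leaf →
      (BT.countOfWRank (BT.wrank s) s : ℝ) - 1 ≤ Real.logb (1 / (1 - a)) 2) := by
  constructor
  · intro i
    have hb : (0:ℝ) < 2 ^ i := by positivity
    rw [le_div_iff₀ hb]
    have hcb := BTProof.clr_bound (i := i) t (BT.wrank t + 1)
    calc (BT.countLayerRoots t i : ℝ) * 2 ^ i
        = ((2 ^ i * BT.clrAux i t (BT.wrank t + 1) : ℕ) : ℝ) := by
          rw [BT.countLayerRoots]; push_cast; ring
      _ ≤ (BT.size t : ℝ) := by exact_mod_cast hcb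
  · intro s hs hne
    have hwbs := BTProof.WB_subtree h hs
    have hch := BTProof.chain_bound a ha₀ ha₁ s hwbs hne
    have hc1 : 1 ≤ BT.countOfWRank (BT.wrank s) s := by
      cases s with
      | leaf => exact absurd rfl hne
      | node l v r => rw [BT.countOfWRank, if_pos rfl]; omega
    have hwle : (BT.weight s : ℝ) ≤ 2 ^ (BT.wrank s + 1) := by
      cases s with
      | leaf => exact absurd rfl hne
      | node l v r => exact_mod_cast BTProof.weight_le_pow rfl
    set i := BT.wrank s with hi
    set c := BT.countOfWRank i s with hc
    have hb0 : (0:ℝ) < 1 - a := by linarith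
    have hb1 : (1:ℝ) - a < 1 := by linarith
    -- 1/2 < (1-a)^(c-1)
    have hhalf : (1:ℝ) / 2 < (1 - a) ^ (c - 1) := by
      have h2 : (2:ℝ) ^ i < (1 - a) ^ (c - 1) * (2 ^ (i + 1)) := by
        calc (2:ℝ) ^ i < (1 - a) ^ (c - 1) * (BT.weight s : ℝ) := hch
          _ ≤ (1 - a) ^ (c - 1) * 2 ^ (i + 1) := by
              apply mul_le_mul_of_nonneg_left hwle (by positivity)
      have hpow : (0:ℝ) < (2:ℝ) ^ i := by positivity
      rw [pow_succ] at h2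
      rw [div_lt_iff₀ (by norm_num : (0:ℝ) < 2)]
      nlinarith [h2, hpow]
    have hB : (1:ℝ) < 1 / (1 - a) := by
      rw [lt_div_iff₀ hb0]; linarith
    have hBpow : ((1:ℝ) / (1 - a)) ^ (c - 1) < 2 := by
      rw [div_pow, one_pow, div_lt_iff₀ (by positivity)]
      nlinarith [hhalf]
    have hlogle : Real.logb (1 / (1 - a)) (((1:ℝ) / (1 - a)) ^ (c - 1))
        ≤ Real.logb (1 / (1 - a)) 2 :=
      Real.logb_le_logb_of_le hB (by positivity) hBpow.le
    rw [Real.logb_pow, Real.logb_self_eq_one hB, mul_one] at hlogle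
    have : ((c - 1 : ℕ) : ℝ) = (c : ℝ) - 1 := by
      have := hc1; push_cast [Nat.cast_sub hc1]; ring
    linarith [hlogle, this.symm.le, this.le]
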